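/- arXiv:q-alg/9711012 — 5 statements merged into one kernel-verified Lean document; each statement's English description precedes it below -/
import Mathlib

section
/- The coloured R-matrix R^{λ,μ}_{p,q} = Q^{1/2}·M where M is the 4×4 matrix with diagonal entries Q^{-1}P^{(λ−μ)/2}, P^{-(λ+μ)/2}, P^{(λ+μ)/2}, Q^{-1}P^{-(λ−μ)/2}, and a single off-diagonal entry Q^{-1}−Q at position ((1,2),(2,1)), satisfies the coloured Yang–Baxter equation R^{λ,μ}₁₂ R^{λ,ν}₁₃ R^{μ,ν}₂₃ = R^{μ,ν}₂₃ R^{λ,ν}₁₃ R^{λ,μ}₁₂ for all colour parameters λ, μ, ν. -/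
set_option maxHeartbeats 0


open Matrix Complex

/-- The coloured `R`-matrix `R^{λ,μ}_{p,q}` of the coloured quantum algebra
`U^c(gl(2))` in the defining representation, with `P = e^θ`, `Q = e^φ` and overall
factor `Q^{1/2} = e^{φ/2}`. -/
noncomputable def RcGl2 (θ φ l m : ℂ) : Matrix (Fin 2 × Fin 2) (Fin 2 × Fin 2) ℂ :=
  fun x y => Complex.exp (φ / 2) *
    (if x = (0, 0) ∧ y = (0, 0) then Complex.exp (-φ) * Complex.exp (θ * (l - m) / 2)
     else if x = (0, 1) ∧ y = (0, 1) then Complex.exp (-(θ * (l + m) / 2))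
     else if x = (0, 1) ∧ y = (1, 0) then Complex.exp (-φ) - Complex.exp φ
     else if x = (1, 0) ∧ y = (1, 0) then Complex.exp (θ * (l + m) / 2)
     else if x = (1, 1) ∧ y = (1, 1) then Complex.exp (-φ) * Complex.exp (-(θ * (l - m) / 2))
     else 0)

/-- Embedding acting on the first and second tensor factors of `(ℂ²)⊗³`. -/
def emb12 (A : Matrix (Fin 2 × Fin 2) (Fin 2 × Fin 2) ℂ) :
    Matrix (Fin 2 × Fin 2 × Fin 2) (Fin 2 × Fin 2 × Fin 2) ℂ :=
  fun x y => A (x.1, x.2.1) (y.1, y.2.1) * (if x.2.2 = y.2.2 then 1 else 0)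

/-- Embedding acting on the second and third tensor factors of `(ℂ²)⊗³`. -/
def emb23 (A : Matrix (Fin 2 × Fin 2) (Fin 2 × Fin 2) ℂ) :
    Matrix (Fin 2 × Fin 2 × Fin 2) (Fin 2 × Fin 2 × Fin 2) ℂ :=
  fun x y => (if x.1 = y.1 then 1 else 0) * A (x.2.1, x.2.2) (y.2.1, y.2.2)

/-- Embedding acting on the first and third tensor factors of `(ℂ²)⊗³`. -/
def emb13 (A : Matrix (Fin 2 × Fin 2) (Fin 2 × Fin 2) ℂ) :
    Matrix (Fin 2 × Fin 2 × Fin 2) (Fin 2 × Fin 2 × Fin 2) ℂ :=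
  fun x y => A (x.1, x.2.2) (y.1, y.2.2) * (if x.2.1 = y.2.1 then 1 else 0)

/-- the coloured `R`-matrix satisfies the coloured Yang–Baxter equation
`R^{λ,μ}₁₂ R^{λ,ν}₁₃ R^{μ,ν}₂₃ = R^{μ,ν}₂₃ R^{λ,ν}₁₃ R^{λ,μ}₁₂`
for all colour parameters `λ, μ, ν ∈ ℂ`. -/
theorem RcGl2_coloured_yang_baxter (θ φ : ℂ) (l m n : ℂ) :
    emb12 (RcGl2 θ φ l m) * emb13 (RcGl2 θ φ l n) * emb23 (RcGl2 θ φ m n) =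
      emb23 (RcGl2 θ φ m n) * emb13 (RcGl2 θ φ l n) * emb12 (RcGl2 θ φ l m) := by
  ext ⟨a,b,c⟩ ⟨d,e,f⟩
  fin_cases a <;> fin_cases b <;> fin_cases c <;> fin_cases d <;> fin_cases e <;> fin_cases f <;>
  · simp only [Matrix.mul_apply, emb12, emb13, emb23, RcGl2, Fintype.sum_prod_type,
      Fin.sum_univ_two]
    norm_num [Prod.ext_iff, ← Complex.exp_add]
    try ring_nf
    try simp only [← Complex.exp_nat_mul, ← Complex.exp_add]
    try ring_nf
end

section
/- In the localization of Gl_{p,q}(2) at the central-up-to-scalars element D = ad − qbc (assumed invertible), the matrix T = [[a,b],[c,d]] has two-sided inverse T^{-1} = D^{-1}·[[d, −p^{-1}b],[−pc, a]] = [[d, −q^{-1}b],[−qc, a]]·D^{-1}, i.e., these matrices satisfy T·T^{-1} = T^{-1}·T = I. -/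
open Matrix

set_option maxHeartbeats 1000000 in
/-- in the localization of `Gl_{p,q}(2)` at the quantum determinant
`D = ad − qbc` (with two-sided inverse `Dinv`), the matrix `T = [[a,b],[c,d]]` has
two-sided inverse `T⁻¹ = D⁻¹·[[d, −p⁻¹b],[−pc, a]] = [[d, −q⁻¹b],[−qc, a]]·D⁻¹`. -/
theorem quantum_group_antipode_matrix
    (A : Type*) [Ring A] [Algebra ℂ A] (p q : ℂ) (hp : p ≠ 0) (hq : q ≠ 0)
    (a b c d Dinv : A)
    (hab : a * b = q • (b * a)) (hac : a * c = p • (c * a))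
    (hbd : b * d = p • (d * b)) (hcd : c * d = q • (d * c))
    (hbc : b * c = (p / q) • (c * b))
    (had : a * d - d * a = (q - p⁻¹) • (b * c))
    (hD : (a * d - q • (b * c)) * Dinv = 1)
    (hD' : Dinv * (a * d - q • (b * c)) = 1) :
    (of ![![Dinv * d, Dinv * (-(p⁻¹ • b))], ![Dinv * (-(p • c)), Dinv * a]]
      = of ![![d * Dinv, (-(q⁻¹ • b)) * Dinv], ![(-(q • c)) * Dinv, a * Dinv]]) ∧
    (of ![![a, b], ![c, d]]) *
      (of ![![Dinv * d, Dinv * (-(p⁻¹ • b))], ![Dinv * (-(p • c)), Dinv * a]]) = 1 ∧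
    (of ![![Dinv * d, Dinv * (-(p⁻¹ • b))], ![Dinv * (-(p • c)), Dinv * a]]) *
      (of ![![a, b], ![c, d]]) = 1 := by
  have hbc2 : b * c = (p * q⁻¹) • (c * b) := by rwa [div_eq_mul_inv] at hbc
  have hab' : ∀ x : A, a*(b*x) = q•(b*(a*x)) := fun x => by
    rw [← mul_assoc, hab, smul_mul_assoc, mul_assoc]
  have hac' : ∀ x : A, a*(c*x) = p•(c*(a*x)) := fun x => by
    rw [← mul_assoc, hac, smul_mul_assoc, mul_assoc]
  have hbd' : ∀ x : A, b*(d*x) = p•(d*(b*x)) := fun x => by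
    rw [← mul_assoc, hbd, smul_mul_assoc, mul_assoc]
  have hcd' : ∀ x : A, c*(d*x) = q•(d*(c*x)) := fun x => by
    rw [← mul_assoc, hcd, smul_mul_assoc, mul_assoc]
  have hbc' : ∀ x : A, b*(c*x) = (p*q⁻¹)•(c*(b*x)) := fun x => by
    rw [← mul_assoc, hbc2, smul_mul_assoc, mul_assoc]
  have had0 : a*d = (q - p⁻¹)•(b*c) + d*a := by rw [← had]; abel
  have had' : ∀ x : A, a*(d*x) = (q - p⁻¹)•(b*(c*x)) + d*(a*x) := fun x => by
    rw [← mul_assoc, had0, add_mul, smul_mul_assoc, mul_assoc, mul_assoc]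
  have hcb : c * b = (q * p⁻¹) • (b * c) := by
    rw [hbc2, smul_smul, show (q * p⁻¹) * (p * q⁻¹) = 1 by field_simp, one_smul]
  have hda : d * a = a * d - (q - p⁻¹) • (b * c) := by rw [← had]; abel
  set D := a*d - q•(b*c) with hDdef
  -- commutation of D with the generators
  have hDd : D * d = d * D := by
    rw [hDdef]
    simp only [mul_sub, sub_mul, mul_add, add_mul, smul_mul_assoc, mul_smul_comm,
      smul_smul, smul_add, smul_sub, mul_assoc, hab, hab', hac, hac', hbd, hbd',
      hcd, hcd', hbc2, hbc', had0, had']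
    match_scalars
    all_goals field_simp
    all_goals try field_simp
    all_goals try rw [eq_div_iff (by simp [hp, hq])]
    all_goals try ring
  have hDa : D * a = a * D := by
    rw [hDdef]
    simp only [mul_sub, sub_mul, mul_add, add_mul, smul_mul_assoc, mul_smul_comm,
      smul_smul, smul_add, smul_sub, mul_assoc, hab, hab', hac, hac', hbd, hbd',
      hcd, hcd', hbc2, hbc', had0, had']
    match_scalars
    all_goals field_simp
    all_goals try field_simp
    all_goals try rw [eq_div_iff (by simp [hp, hq])]
    all_goals try ring
  have hDb : D * b = (q * p⁻¹) • (b * D) := by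
    rw [hDdef]
    simp only [mul_sub, sub_mul, mul_add, add_mul, smul_mul_assoc, mul_smul_comm,
      smul_smul, smul_add, smul_sub, mul_assoc, hab, hab', hac, hac', hbd, hbd',
      hcd, hcd', hbc2, hbc', had0, had']
    match_scalars
    all_goals field_simp
    all_goals try field_simp
    all_goals try rw [eq_div_iff (by simp [hp, hq])]
    all_goals try ring
  have hDc : D * c = (p * q⁻¹) • (c * D) := by
    rw [hDdef]
    simp only [mul_sub, sub_mul, mul_add, add_mul, smul_mul_assoc, mul_smul_comm,
      smul_smul, smul_add, smul_sub, mul_assoc, hab, hab', hac, hac', hbd, hbd',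
      hcd, hcd', hbc2, hbc', had0, had']
    match_scalars
    all_goals field_simp
    all_goals try field_simp
    all_goals try rw [eq_div_iff (by simp [hp, hq])]
    all_goals try ring
  -- commutation of Dinv with the generators
  have key : ∀ (x : A) (s : ℂ), D * x = s • (x * D) → x * Dinv = s • (Dinv * x) := by
    intro x s h
    calc x * Dinv = (Dinv * D) * (x * Dinv) := by rw [hD', one_mul]
    _ = Dinv * (D * x) * Dinv := by noncomm_ring
    _ = Dinv * (s • (x * D)) * Dinv := by rw [h]
    _ = s • (Dinv * x * (D * Dinv)) := by
        simp only [mul_smul_comm, smul_mul_assoc, mul_assoc]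
    _ = s • (Dinv * x) := by rw [hD, mul_one]
  have hid : Dinv * d = d * Dinv := by
    have := key d 1 (by simpa using hDd); simpa using this.symm
  have hia : Dinv * a = a * Dinv := by
    have := key a 1 (by simpa using hDa); simpa using this.symm
  have hib : Dinv * b = (p * q⁻¹) • (b * Dinv) := by
    have h := key b (q * p⁻¹) hDb
    rw [h, smul_smul, show (p * q⁻¹) * (q * p⁻¹) = 1 by field_simp, one_smul]
  have hic : Dinv * c = (q * p⁻¹) • (c * Dinv) := by
    have h := key c (p * q⁻¹) hDc
    rw [h, smul_smul, show (q * p⁻¹) * (p * q⁻¹) = 1 by field_simp, one_smul]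
  -- the four entry identities for the matrix equality
  have e12 : Dinv * (-(p⁻¹ • b)) = (-(q⁻¹ • b)) * Dinv := by
    rw [mul_neg, mul_smul_comm, hib, smul_smul,
      show p⁻¹ * (p * q⁻¹) = q⁻¹ by field_simp, neg_mul, smul_mul_assoc]
  have e21 : Dinv * (-(p • c)) = (-(q • c)) * Dinv := by
    rw [mul_neg, mul_smul_comm, hic, smul_smul,
      show p * (q * p⁻¹) = q by field_simp, neg_mul, smul_mul_assoc]
  have heq : (of ![![Dinv * d, Dinv * (-(p⁻¹ • b))], ![Dinv * (-(p • c)), Dinv * a]] :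
      Matrix (Fin 2) (Fin 2) A)
      = of ![![d * Dinv, (-(q⁻¹ • b)) * Dinv], ![(-(q • c)) * Dinv, a * Dinv]] := by
    rw [hid, hia, e12, e21]
  refine ⟨heq, ?_, ?_⟩
  · rw [heq, mul_fin_two]
    have g11 : a * (d * Dinv) + b * (-(q • c) * Dinv) = 1 := by
      have h : a * (d * Dinv) + b * (-(q • c) * Dinv) = (a * d - q • (b * c)) * Dinv := by
        simp only [neg_mul, mul_neg, smul_mul_assoc, mul_smul_comm, sub_mul, mul_assoc]
        abel
      rw [h, hD]
    have g12 : a * (-(q⁻¹ • b) * Dinv) + b * (a * Dinv) = 0 := by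
      have h : a * (-(q⁻¹ • b) * Dinv) + b * (a * Dinv)
          = (-(q⁻¹ • (a * b)) + b * a) * Dinv := by
        simp only [neg_mul, mul_neg, smul_mul_assoc, mul_smul_comm, add_mul, mul_assoc]
      rw [h, hab, smul_smul, inv_mul_cancel₀ hq, one_smul, neg_add_cancel, zero_mul]
    have g21 : c * (d * Dinv) + d * (-(q • c) * Dinv) = 0 := by
      have h : c * (d * Dinv) + d * (-(q • c) * Dinv) = (c * d - q • (d * c)) * Dinv := by
        simp only [neg_mul, mul_neg, smul_mul_assoc, mul_smul_comm, sub_mul, mul_assoc]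
        abel
      rw [h, hcd, sub_self, zero_mul]
    have g22 : c * (-(q⁻¹ • b) * Dinv) + d * (a * Dinv) = 1 := by
      have h : c * (-(q⁻¹ • b) * Dinv) + d * (a * Dinv)
          = (d * a - q⁻¹ • (c * b)) * Dinv := by
        simp only [neg_mul, mul_neg, smul_mul_assoc, mul_smul_comm, sub_mul, mul_assoc]
        abel
      rw [h]
      have h2 : d * a - q⁻¹ • (c * b) = a * d - q • (b * c) := by
        rw [hda, hcb, smul_smul]
        match_scalars
        all_goals field_simp
        all_goals try field_simp
        all_goals try rw [eq_div_iff (by simp [hp, hq])]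
        all_goals try ring
      rw [h2, hD]
    rw [g11, g12, g21, g22, ← one_fin_two]
  · rw [mul_fin_two]
    have g11 : Dinv * d * a + Dinv * (-(p⁻¹ • b)) * c = 1 := by
      have h : Dinv * d * a + Dinv * (-(p⁻¹ • b)) * c
          = Dinv * (d * a - p⁻¹ • (b * c)) := by
        simp only [neg_mul, mul_neg, smul_mul_assoc, mul_smul_comm, mul_sub, mul_assoc]
        abel
      rw [h]
      have h2 : d * a - p⁻¹ • (b * c) = a * d - q • (b * c) := by
        rw [hda]
        match_scalars
        all_goals try ring
      rw [h2, hD']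
    have g12 : Dinv * d * b + Dinv * (-(p⁻¹ • b)) * d = 0 := by
      have h : Dinv * d * b + Dinv * (-(p⁻¹ • b)) * d
          = Dinv * (d * b - p⁻¹ • (b * d)) := by
        simp only [neg_mul, mul_neg, smul_mul_assoc, mul_smul_comm, mul_sub, mul_assoc]
        abel
      rw [h, hbd, smul_smul, inv_mul_cancel₀ hp, one_smul, sub_self, mul_zero]
    have g21 : Dinv * (-(p • c)) * a + Dinv * a * c = 0 := by
      have h : Dinv * (-(p • c)) * a + Dinv * a * c
          = Dinv * (a * c - p • (c * a)) := by
        simp only [neg_mul, mul_neg, smul_mul_assoc, mul_smul_comm, mul_sub, mul_assoc]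
        abel
      rw [h, hac, sub_self, mul_zero]
    have g22 : Dinv * (-(p • c)) * b + Dinv * a * d = 1 := by
      have h : Dinv * (-(p • c)) * b + Dinv * a * d
          = Dinv * (a * d - p • (c * b)) := by
        simp only [neg_mul, mul_neg, smul_mul_assoc, mul_smul_comm, mul_sub, mul_assoc]
        abel
      rw [h]
      have h2 : a * d - p • (c * b) = a * d - q • (b * c) := by
        rw [hcb, smul_smul]
        congr 1
        congr 1
        field_simp
      rw [h2, hD']
    rw [g11, g12, g21, g22, ← one_fin_two]
end

section
/- The map σ^ν on the algebra U_{P,Q}(gl(2)) defined on generators by σ^ν(Ĵ₀) = Ĵ₀, σ^ν(Ĵ±) = P^{(ν−1)/2} Ĵ±, σ^ν(Ẑ) = ν Ẑ, extends to an algebra isomorphism from the algebra with parameter P to the algebra with parameter P^ν (Q fixed), i.e. it preserves the defining relations [Ĵ₀,Ĵ±] = ±Ĵ±, [Ĵ₊,Ĵ₋] = P'^{2Ẑ−1}[2Ĵ₀]_Q, [Ẑ,Ĵ₀] = [Ẑ,Ĵ±] = 0 with P replaced by P^ν in the target. -/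
open Complex

/-- The defining relations of `U_{P,Q}(gl(2))` (with `Q` fixed), written in terms of
generators `Ĵ₀, Ĵ₊, Ĵ₋, Ẑ` together with the group-like elements `W = P^{2Ẑ}` and
`K = Q^{2Ĵ₀}` (and their inverses), so that
`[Ĵ₊, Ĵ₋] = P^{2Ẑ−1} [2Ĵ₀]_Q = (P(Q−Q⁻¹))⁻¹ · W(K − K⁻¹)`. -/
def Ugl2Rel (A : Type*) [Ring A] [Algebra ℂ A] (P Q : ℂ)
    (J0 Jp Jm Z W Winv K Kinv : A) : Prop :=
  (J0 * Jp - Jp * J0 = Jp) ∧ (J0 * Jm - Jm * J0 = -Jm) ∧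
  (Jp * Jm - Jm * Jp = (P * (Q - Q⁻¹))⁻¹ • (W * (K - Kinv))) ∧
  (Z * J0 = J0 * Z) ∧ (Z * Jp = Jp * Z) ∧ (Z * Jm = Jm * Z) ∧
  (W * Winv = 1) ∧ (Winv * W = 1) ∧ (K * Kinv = 1) ∧ (Kinv * K = 1) ∧
  (W * J0 = J0 * W) ∧ (W * Jp = Jp * W) ∧ (W * Jm = Jm * W) ∧ (W * Z = Z * W) ∧
  (K * J0 = J0 * K) ∧ (K * Z = Z * K) ∧
  (K * Jp = (Q ^ 2) • (Jp * K)) ∧ (K * Jm = (Q⁻¹ ^ 2) • (Jm * K))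

/-- with `P = e^θ`, `Q = e^φ`, the colour map
`σ^ν : Ĵ₀ ↦ Ĵ₀, Ĵ± ↦ P^{(ν−1)/2} Ĵ±, Ẑ ↦ ν Ẑ` preserves the defining relations of
`U_{P,Q}(gl(2))`, with `P` replaced by `P^ν = e^{νθ}` in the target: whenever
elements of an algebra satisfy the relations with parameter `P^ν`, their images
under `σ^ν` satisfy the relations with parameter `P`, so `σ^ν` extends to an algebra
isomorphism `U_{P,Q}(gl(2)) → U_{P^ν,Q}(gl(2))`. -/
theorem sigma_nu_preserves_Ugl2_relations
    (A : Type*) [Ring A] [Algebra ℂ A] (θ φ ν : ℂ) (hν : ν ≠ 0)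
    (J0 Jp Jm Z W Winv K Kinv : A)
    (h : Ugl2Rel A (Complex.exp (ν * θ)) (Complex.exp φ) J0 Jp Jm Z W Winv K Kinv) :
    Ugl2Rel A (Complex.exp θ) (Complex.exp φ) J0
      (Complex.exp (θ * (ν - 1) / 2) • Jp) (Complex.exp (θ * (ν - 1) / 2) • Jm)
      (ν • Z) W Winv K Kinv := by
  obtain ⟨h1, h2, h3, h4, h5, h6, h7, h8, h9, h10, h11, h12, h13, h14, h15, h16, h17, h18⟩ := h
  set c := Complex.exp (θ * (ν - 1) / 2) with hc
  have key : c * c * (Complex.exp (ν * θ) * (Complex.exp φ - (Complex.exp φ)⁻¹))⁻¹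
      = (Complex.exp θ * (Complex.exp φ - (Complex.exp φ)⁻¹))⁻¹ := by
    rw [mul_inv, mul_inv, ← mul_assoc, hc, ← Complex.exp_add, ← Complex.exp_neg,
      ← Complex.exp_neg, ← Complex.exp_add]
    ring_nf
    rw [Complex.exp_neg]
    ring
  refine ⟨?_, ?_, ?_, ?_, ?_, ?_, h7, h8, h9, h10, h11, ?_, ?_, ?_, h15, ?_, ?_, ?_⟩
  · rw [mul_smul_comm, smul_mul_assoc, ← smul_sub, h1]
  · rw [mul_smul_comm, smul_mul_assoc, ← smul_sub, h2, smul_neg]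
  · rw [smul_mul_assoc, mul_smul_comm, smul_smul, smul_mul_assoc, mul_smul_comm,
      smul_smul, ← smul_sub, h3, smul_smul, key]
  · rw [smul_mul_assoc, mul_smul_comm, h4]
  · rw [smul_mul_assoc, mul_smul_comm, smul_mul_assoc, mul_smul_comm, smul_comm, h5]
  · rw [smul_mul_assoc, mul_smul_comm, smul_mul_assoc, mul_smul_comm, smul_comm, h6]
  · rw [mul_smul_comm, smul_mul_assoc, h12]
  · rw [mul_smul_comm, smul_mul_assoc, h13]
  · rw [mul_smul_comm, smul_mul_assoc, h14]
  · rw [mul_smul_comm, smul_mul_assoc, h16]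
  · rw [mul_smul_comm, smul_mul_assoc, h17, smul_comm]
  · rw [mul_smul_comm, smul_mul_assoc, h18, smul_comm]
end

section
/- In the superalgebra Gl_{p,q}(1/1) generated by even elements a, d and odd elements b, c subject to ab = p^{-1}ba, ac = q^{-1}ca, bd = pdb, cd = qdc, bc = −(p/q)cb, ad − da = (q − p^{-1})bc, b² = c² = 0, the quantum superdeterminant D = ad^{-1} − bd^{-1}cd^{-1} (where d is adjoined an inverse) is central: D commutes with a, b, c, d. -/
/-- in the superalgebra `Gl_{p,q}(1/1)` (with `a, d` invertible), the
quantum superdeterminant `D = ad⁻¹ − bd⁻¹cd⁻¹` is central: it commutes with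
`a, b, c, d`. -/
theorem superdeterminant_central
    (A : Type*) [Ring A] [Algebra ℂ A] (p q : ℂ) (hp : p ≠ 0) (hq : q ≠ 0)
    (a b c d ainv dinv : A)
    (hab : a * b = p⁻¹ • (b * a)) (hac : a * c = q⁻¹ • (c * a))
    (hbd : b * d = p • (d * b)) (hcd : c * d = q • (d * c))
    (hbc : b * c = -((p / q) • (c * b)))
    (had : a * d - d * a = (q - p⁻¹) • (b * c))
    (hb2 : b * b = 0) (hc2 : c * c = 0)
    (ha1 : a * ainv = 1) (ha2 : ainv * a = 1)
    (hd1 : d * dinv = 1) (hd2 : dinv * d = 1) :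
    (a * dinv - b * dinv * c * dinv) * a = a * (a * dinv - b * dinv * c * dinv) ∧
    (a * dinv - b * dinv * c * dinv) * b = b * (a * dinv - b * dinv * c * dinv) ∧
    (a * dinv - b * dinv * c * dinv) * c = c * (a * dinv - b * dinv * c * dinv) ∧
    (a * dinv - b * dinv * c * dinv) * d = d * (a * dinv - b * dinv * c * dinv) := by
  -- base commutation lemmas, oriented to sort letters as a < b < c < d/dinv
  have hba : b * a = p • (a * b) := by
    rw [hab, smul_smul, mul_inv_cancel₀ hp, one_smul]
  have hca : c * a = q • (a * c) := by
    rw [hac, smul_smul, mul_inv_cancel₀ hq, one_smul]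
  have hcb : c * b = -((q / p) • (b * c)) := by
    rw [hbc, smul_neg, smul_smul, neg_neg,
      show q / p * (p / q) = 1 by field_simp, one_smul]
  have hda : d * a = a * d - (q - p⁻¹) • (b * c) := by
    rw [← had]; abel
  have hdb : d * b = p⁻¹ • (b * d) := by
    rw [hbd, smul_smul, inv_mul_cancel₀ hp, one_smul]
  have hdc : d * c = q⁻¹ • (c * d) := by
    rw [hcd, smul_smul, inv_mul_cancel₀ hq, one_smul]
  -- commutation with dinv
  have hDb : dinv * b = p • (b * dinv) := by
    have h := congrArg (fun x => dinv * x * dinv) hbd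
    simp only [mul_smul_comm, smul_mul_assoc] at h
    rw [show dinv * (b * d) * dinv = dinv * b * (d * dinv) by noncomm_ring, hd1, mul_one,
      show dinv * (d * b) * dinv = dinv * d * (b * dinv) by noncomm_ring, hd2, one_mul] at h
    exact h
  have hDc : dinv * c = q • (c * dinv) := by
    have h := congrArg (fun x => dinv * x * dinv) hcd
    simp only [mul_smul_comm, smul_mul_assoc] at h
    rw [show dinv * (c * d) * dinv = dinv * c * (d * dinv) by noncomm_ring, hd1, mul_one,
      show dinv * (d * c) * dinv = dinv * d * (c * dinv) by noncomm_ring, hd2, one_mul] at h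
    exact h
  have hDa : dinv * a = a * dinv + ((q - p⁻¹) * (p * q)) • (b * (c * (dinv * dinv))) := by
    have h := congrArg (fun x => dinv * x * dinv) had
    simp only [mul_smul_comm, smul_mul_assoc, mul_sub, sub_mul] at h
    rw [show dinv * (a * d) * dinv = dinv * a * (d * dinv) by noncomm_ring, hd1, mul_one,
      show dinv * (d * a) * dinv = dinv * d * (a * dinv) by noncomm_ring, hd2, one_mul,
      show dinv * (b * c) * dinv = (dinv * b) * (c * dinv) by noncomm_ring, hDb] at h
    have h2 : dinv * a - a * dinv
        = ((q - p⁻¹) * (p * q)) • (b * (c * (dinv * dinv))) := by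
      rw [h, smul_mul_assoc, show b * dinv * (c * dinv) = b * (dinv * c) * dinv by
        noncomm_ring, hDc]
      simp only [mul_smul_comm, smul_mul_assoc, smul_smul, mul_assoc]
      try match_scalars <;> ring
    linear_combination (norm := abel) h2
  -- ∀-forms of the rewrite rules (right-associated)
  have Rba : ∀ x : A, b * (a * x) = p • (a * (b * x)) := fun x => by
    rw [← mul_assoc, hba]; simp only [smul_mul_assoc, mul_assoc]
  have Rca : ∀ x : A, c * (a * x) = q • (a * (c * x)) := fun x => by
    rw [← mul_assoc, hca]; simp only [smul_mul_assoc, mul_assoc]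
  have Rcb : ∀ x : A, c * (b * x) = -((q / p) • (b * (c * x))) := fun x => by
    rw [← mul_assoc, hcb]; simp only [neg_mul, smul_mul_assoc, mul_assoc]
  have Rda : ∀ x : A, d * (a * x) = a * (d * x) - (q - p⁻¹) • (b * (c * x)) := fun x => by
    rw [← mul_assoc, hda]; simp only [sub_mul, smul_mul_assoc, mul_assoc]
  have Rdb : ∀ x : A, d * (b * x) = p⁻¹ • (b * (d * x)) := fun x => by
    rw [← mul_assoc, hdb]; simp only [smul_mul_assoc, mul_assoc]
  have Rdc : ∀ x : A, d * (c * x) = q⁻¹ • (c * (d * x)) := fun x => by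
    rw [← mul_assoc, hdc]; simp only [smul_mul_assoc, mul_assoc]
  have RDa : ∀ x : A, dinv * (a * x)
      = a * (dinv * x) + ((q - p⁻¹) * (p * q)) • (b * (c * (dinv * (dinv * x)))) := fun x => by
    rw [← mul_assoc, hDa]; simp only [add_mul, smul_mul_assoc, mul_assoc]
  have RDb : ∀ x : A, dinv * (b * x) = p • (b * (dinv * x)) := fun x => by
    rw [← mul_assoc, hDb]; simp only [smul_mul_assoc, mul_assoc]
  have RDc : ∀ x : A, dinv * (c * x) = q • (c * (dinv * x)) := fun x => by
    rw [← mul_assoc, hDc]; simp only [smul_mul_assoc, mul_assoc]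
  have RDd : ∀ x : A, dinv * (d * x) = x := fun x => by rw [← mul_assoc, hd2, one_mul]
  have RdD : ∀ x : A, d * (dinv * x) = x := fun x => by rw [← mul_assoc, hd1, one_mul]
  have Rbb : ∀ x : A, b * (b * x) = 0 := fun x => by rw [← mul_assoc, hb2, zero_mul]
  have Rcc : ∀ x : A, c * (c * x) = 0 := fun x => by rw [← mul_assoc, hc2, zero_mul]
  refine ⟨?_, ?_, ?_, ?_⟩ <;>
  · simp only [sub_mul, mul_sub, mul_assoc, mul_add, add_mul, neg_mul, mul_neg,
      smul_mul_assoc, mul_smul_comm, smul_add, smul_sub, smul_neg, smul_smul,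
      Rba, Rca, Rcb, Rda, Rdb, Rdc, RDa, RDb, RDc, RDd, RdD, Rbb, Rcc,
      hba, hca, hcb, hda, hdb, hdc, hDa, hDb, hDc, hd1, hd2, hb2, hc2,
      mul_one, one_mul, mul_zero, zero_mul, smul_zero, add_zero, zero_add,
      sub_zero, zero_sub, neg_neg, neg_zero]
    try match_scalars <;> field_simp <;> ring
end

section
/- In Gl_{p,q}(1/1) with a, d invertible, the matrix T = [[a,b],[c,d]] has two-sided inverse T^{-1} = [[a^{-1} + a^{-1}bd^{-1}ca^{-1}, −a^{-1}bd^{-1}], [−d^{-1}ca^{-1}, d^{-1} + d^{-1}ca^{-1}bd^{-1}]], i.e., T·T^{-1} = T^{-1}·T = I as 2×2 matrices over the superalgebra. -/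
open Matrix

/-- in `Gl_{p,q}(1/1)` with `a, d` invertible, the matrix
`T = [[a,b],[c,d]]` has two-sided inverse
`T⁻¹ = [[a⁻¹ + a⁻¹bd⁻¹ca⁻¹, −a⁻¹bd⁻¹], [−d⁻¹ca⁻¹, d⁻¹ + d⁻¹ca⁻¹bd⁻¹]]`. -/
theorem quantum_supergroup_T_inverse
    (A : Type*) [Ring A] [Algebra ℂ A] (p q : ℂ) (hp : p ≠ 0) (hq : q ≠ 0)
    (a b c d ainv dinv : A)
    (hab : a * b = p⁻¹ • (b * a)) (hac : a * c = q⁻¹ • (c * a))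
    (hbd : b * d = p • (d * b)) (hcd : c * d = q • (d * c))
    (hbc : b * c = -((p / q) • (c * b)))
    (had : a * d - d * a = (q - p⁻¹) • (b * c))
    (hb2 : b * b = 0) (hc2 : c * c = 0)
    (ha1 : a * ainv = 1) (ha2 : ainv * a = 1)
    (hd1 : d * dinv = 1) (hd2 : dinv * d = 1) :
    (of ![![a, b], ![c, d]]) *
      (of ![![ainv + ainv * b * dinv * c * ainv, -(ainv * b * dinv)],
            ![-(dinv * c * ainv), dinv + dinv * c * ainv * b * dinv]]) = 1 ∧
    (of ![![ainv + ainv * b * dinv * c * ainv, -(ainv * b * dinv)],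
          ![-(dinv * c * ainv), dinv + dinv * c * ainv * b * dinv]]) *
      (of ![![a, b], ![c, d]]) = 1 := by
  -- cancellation continuation lemmas
  have ha1' : ∀ x : A, a * (ainv * x) = x := fun x => by rw [← mul_assoc, ha1, one_mul]
  have ha2' : ∀ x : A, ainv * (a * x) = x := fun x => by rw [← mul_assoc, ha2, one_mul]
  have hd1' : ∀ x : A, d * (dinv * x) = x := fun x => by rw [← mul_assoc, hd1, one_mul]
  have hd2' : ∀ x : A, dinv * (d * x) = x := fun x => by rw [← mul_assoc, hd2, one_mul]
  have ha1r : ∀ x : A, x * a * ainv = x := fun x => by rw [mul_assoc, ha1, mul_one]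
  have ha2r : ∀ x : A, x * ainv * a = x := fun x => by rw [mul_assoc, ha2, mul_one]
  have hd1r : ∀ x : A, x * d * dinv = x := fun x => by rw [mul_assoc, hd1, mul_one]
  have hd2r : ∀ x : A, x * dinv * d = x := fun x => by rw [mul_assoc, hd2, mul_one]
  -- commutation of b, c with the inverses
  have h1 : dinv * b = p • (b * dinv) := by
    have : dinv * (b * d) * dinv = dinv * (p • (d * b)) * dinv := by rw [hbd]
    simpa [mul_assoc, hd1, hd2, hd1', hd2', mul_smul_comm, smul_mul_assoc] using this
  have h2 : dinv * c = q • (c * dinv) := by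
    have : dinv * (c * d) * dinv = dinv * (q • (d * c)) * dinv := by rw [hcd]
    simpa [mul_assoc, hd1, hd2, hd1', hd2', mul_smul_comm, smul_mul_assoc] using this
  have h3 : ainv * b = p • (b * ainv) := by
    have : ainv * (a * b) * ainv = ainv * (p⁻¹ • (b * a)) * ainv := by rw [hab]
    have h' : b * ainv = p⁻¹ • (ainv * b) := by
      simpa [mul_assoc, ha1, ha2, ha1', ha2', mul_smul_comm, smul_mul_assoc] using this
    rw [h', smul_smul, mul_inv_cancel₀ hp, one_smul]
  have h4 : ainv * c = q • (c * ainv) := by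
    have : ainv * (a * c) * ainv = ainv * (q⁻¹ • (c * a)) * ainv := by rw [hac]
    have h' : c * ainv = q⁻¹ • (ainv * c) := by
      simpa [mul_assoc, ha1, ha2, ha1', ha2', mul_smul_comm, smul_mul_assoc] using this
    rw [h', smul_smul, mul_inv_cancel₀ hq, one_smul]
  have h5 : c * b = -((q / p) • (b * c)) := by
    rw [hbc, smul_neg, neg_neg, smul_smul]
    rw [div_mul_div_comm, mul_comm q p, div_self (by exact mul_ne_zero hp hq), one_smul]
  -- "continuation" versions for simp, plus squares
  have h1' : ∀ x : A, dinv * (b * x) = p • (b * (dinv * x)) := fun x => by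
    rw [← mul_assoc, h1, smul_mul_assoc, mul_assoc]
  have h2' : ∀ x : A, dinv * (c * x) = q • (c * (dinv * x)) := fun x => by
    rw [← mul_assoc, h2, smul_mul_assoc, mul_assoc]
  have h3' : ∀ x : A, ainv * (b * x) = p • (b * (ainv * x)) := fun x => by
    rw [← mul_assoc, h3, smul_mul_assoc, mul_assoc]
  have h4' : ∀ x : A, ainv * (c * x) = q • (c * (ainv * x)) := fun x => by
    rw [← mul_assoc, h4, smul_mul_assoc, mul_assoc]
  have h5' : ∀ x : A, c * (b * x) = -((q / p) • (b * (c * x))) := fun x => by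
    rw [← mul_assoc, h5, neg_mul, smul_mul_assoc, mul_assoc]
  have hb2' : ∀ x : A, b * (b * x) = 0 := fun x => by rw [← mul_assoc, hb2, zero_mul]
  have hc2' : ∀ x : A, c * (c * x) = 0 := fun x => by rw [← mul_assoc, hc2, zero_mul]
  -- the four vanishing cross terms
  have L1 : b * dinv * c * ainv * b * dinv = 0 := by
    simp [mul_assoc, h1', h2', h3', h4', h5', hb2', hc2', h1, h2, h3, h4, h5, hb2, hc2,
      mul_smul_comm, smul_mul_assoc]
  have L2 : c * ainv * b * dinv * c * ainv = 0 := by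
    simp [mul_assoc, h1', h2', h3', h4', h5', hb2', hc2', h1, h2, h3, h4, h5, hb2, hc2,
      mul_smul_comm, smul_mul_assoc]
  have L3 : ainv * b * dinv * c * ainv * b = 0 := by
    simp [mul_assoc, h1', h2', h3', h4', h5', hb2', hc2', h1, h2, h3, h4, h5, hb2, hc2,
      mul_smul_comm, smul_mul_assoc]
  have L4 : dinv * c * ainv * b * dinv * c = 0 := by
    simp [mul_assoc, h1', h2', h3', h4', h5', hb2', hc2', h1, h2, h3, h4, h5, hb2, hc2,
      mul_smul_comm, smul_mul_assoc]
  constructor <;>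
  · ext i j
    fin_cases i <;> fin_cases j <;>
      simp only [Matrix.mul_apply, Fin.sum_univ_two, Matrix.of_apply, Matrix.cons_val',
        Matrix.cons_val_zero, Matrix.cons_val_one, Matrix.head_cons,
        Matrix.empty_val', Matrix.cons_val_fin_one, Matrix.one_apply] <;>
      norm_num <;>
      simp only [mul_add, add_mul, mul_neg, neg_mul, mul_one, one_mul, ← mul_assoc,
        ha1, ha2, hd1, hd2, ha1r, ha2r, hd1r, hd2r, L1, L2, L3, L4, one_mul] <;>
      abel
end
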